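/- arXiv:0905.3705 — 4 statements merged into one kernel-verified Lean document; each statement's English description precedes it below -/
import Mathlib

section
/- Let F and G be smooth cubics in ℂ[X,Y,Z] whose common projective zero set consists of exactly nine distinct points p₁,…,p₉ of ℙ², with F and G meeting transversally at each of these points. Then the complex vector space of homogeneous degree-3 polynomials vanishing at all nine points p₁,…,p₉ is exactly the two-dimensional span of F and G. -/
open MvPolynomial

/-- The gradient of a polynomial in `ℂ[X,Y,Z]` at a point of `ℂ³`. -/
noncomputable def grad (F : MvPolynomial (Fin 3) ℂ) (v : Fin 3 → ℂ) : Fin 3 → ℂ :=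
  fun i => eval v (pderiv i F)

/-- A cubic: a nonzero homogeneous polynomial of degree 3 in `ℂ[X,Y,Z]`. -/
def IsCubic (F : MvPolynomial (Fin 3) ℂ) : Prop :=
  F ≠ 0 ∧ F.IsHomogeneous 3

/-- A smooth cubic: `(0,0,0)` is the only common zero in `ℂ³` of the three
partial derivatives. -/
def SmoothCubic (F : MvPolynomial (Fin 3) ℂ) : Prop :=
  IsCubic F ∧ ∀ v : Fin 3 → ℂ, grad F v = 0 → v = 0

/-- `F` and `G` meet transversally at (the projective point represented by) `v`:
their gradients at `v` are linearly independent over `ℂ`. -/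
def Transverse (F G : MvPolynomial (Fin 3) ℂ) (v : Fin 3 → ℂ) : Prop :=
  LinearIndependent ℂ ![grad F v, grad G v]

/-- Two nonzero vectors of `ℂ³` represent the same point of `ℙ²`. -/
def SameProjPt (u v : Fin 3 → ℂ) : Prop :=
  ∃ c : ℂ, c ≠ 0 ∧ c • u = v

/-- The common projective zero set of `F` and `G` consists of exactly the nine
distinct points of `ℙ²` represented by `p 0, …, p 8`. -/
def NinePoints (F G : MvPolynomial (Fin 3) ℂ) (p : Fin 9 → Fin 3 → ℂ) : Prop :=
  (∀ i, p i ≠ 0) ∧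
  (∀ i j, i ≠ j → ¬ SameProjPt (p i) (p j)) ∧
  (∀ i, eval (p i) F = 0 ∧ eval (p i) G = 0) ∧
  (∀ v : Fin 3 → ℂ, v ≠ 0 → eval v F = 0 → eval v G = 0 → ∃ i, SameProjPt (p i) v)

/-!
A smooth cubic is irreducible: a line component would meet the residual conic, and such a common
zero is a singular point. Transversality at one point forbids `G ∈ ℂ F`, so `F` and `G` are coprime.
Let `Wₙ` be the space of forms of degree `n`. The nine points are separated by products of eight
lines, so the octics through them have codimension `9` in `W₈`, of dimension `45`. The octics
`W₅ F + W₅ G` in `(F, G)` have dimension `21 + 21 - 6 = 36`, since `a F + b G = 0` forces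
`(a, b) = (c G, -c F)` with `c ∈ W₂`; hence every octic through the points lies in `(F, G)`.
This ideal is saturated (reduce modulo `X₀`, which does not divide `F`). For a cubic `H` through
the points, all `m H` with `m` a monomial of degree `5` lie in `(F, G)`, hence so does `H`, and
comparing degree-`3` parts puts `H` in the span of `F` and `G`.
-/

lemma dvd_of_dvd_mul_of_dvd_mul_of_isRelPrime {α : Type*} [CommMonoidWithZero α]
    [IsCancelMulZero α] [DecompositionMonoid α] {d x y a : α} (hx : d ∣ x * a) (hy : d ∣ y * a)
    (hxy : IsRelPrime x y) : d ∣ a := by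
  obtain ⟨d₁, d₂, hd₁, ⟨a', rfl⟩, rfl⟩ := exists_dvd_and_dvd_of_dvd_mul hx
  rcases eq_or_ne d₂ 0 with rfl | hd₂
  · simp
  have : d₁ ∣ y * a' := by
    rw [mul_left_comm, mul_comm d₁] at hy
    exact (mul_dvd_mul_iff_left hd₂).1 hy
  rw [mul_comm d₁]
  exact mul_dvd_mul_left d₂ ((hxy.of_dvd_left hd₁).dvd_of_dvd_mul_left this)

lemma Submodule.finrank_inf_ker_add_finrank_map {K V W : Type*} [DivisionRing K]
    [AddCommGroup V] [Module K V] [AddCommGroup W] [Module K W] (p : Submodule K V)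
    [FiniteDimensional K p] (f : V →ₗ[K] W) :
    Module.finrank K ↥(p ⊓ LinearMap.ker f) + Module.finrank K ↥(p.map f) =
      Module.finrank K p := by
  rw [← (f.domRestrict p).finrank_range_add_finrank_ker, LinearMap.range_domRestrict,
    LinearMap.ker_domRestrict, ← Submodule.map_comap_subtype, Submodule.finrank_map_subtype_eq,
    add_comm]

namespace MvPolynomial

variable {σ R K : Type*}

section Grading

variable [CommSemiring R]

/-- `gradedPoly A = A(T • x) = ∑ₖ Aₖ Tᵏ`, where `Aₖ` is the degree-`k` component of `A`. -/
noncomputable def gradedPoly : MvPolynomial σ R →+* Polynomial (MvPolynomial σ R) :=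
  eval₂Hom (Polynomial.C.comp C) fun i => Polynomial.C (X i) * Polynomial.X

lemma gradedPoly_monomial (d : σ →₀ ℕ) (c : R) :
    gradedPoly (monomial d c) = Polynomial.monomial d.degree (monomial d c) := by
  simp only [gradedPoly, eval₂Hom_monomial, RingHom.coe_comp, Function.comp_apply, Finsupp.prod,
    mul_pow, ← Polynomial.C_pow]
  rw [Finset.prod_mul_distrib, ← map_prod, Finset.prod_pow_eq_pow_sum,
    ← Polynomial.C_mul_X_pow_eq_monomial, monomial_eq, Finsupp.prod, Finsupp.degree_apply,
    map_mul, mul_assoc]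

lemma coeff_gradedPoly (A : MvPolynomial σ R) (k : ℕ) :
    (gradedPoly A).coeff k = homogeneousComponent k A := by
  induction A using MvPolynomial.induction_on' with
  | monomial d c =>
    rw [gradedPoly_monomial, Polynomial.coeff_monomial,
      homogeneousComponent_of_mem (isHomogeneous_monomial c rfl)]
    simp only [eq_comm]
  | add A B hA hB => rw [map_add, Polynomial.coeff_add, hA, hB, map_add]

lemma gradedPoly_injective : Function.Injective (gradedPoly : MvPolynomial σ R →+* _) := by
  intro A B h
  ext d
  simpa [coeff_gradedPoly, coeff_homogeneousComponent] using
    congrArg (fun P => coeff d (P.coeff d.degree)) h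

lemma IsHomogeneous.gradedPoly_eq {A : MvPolynomial σ R} {n : ℕ} (hA : A.IsHomogeneous n) :
    gradedPoly A = Polynomial.monomial n A := by
  ext k : 1
  rw [coeff_gradedPoly, Polynomial.coeff_monomial, homogeneousComponent_of_mem hA]
  rcases eq_or_ne k n with rfl | h <;> simp [*, Ne.symm]

lemma isHomogeneous_of_forall_ne_homogeneousComponent_eq_zero {A : MvPolynomial σ R} {n : ℕ}
    (h : ∀ k ≠ n, homogeneousComponent k A = 0) : A.IsHomogeneous n := by
  rw [← sum_homogeneousComponent A]
  refine IsHomogeneous.sum _ _ _ fun k _ => ?_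
  rcases eq_or_ne k n with rfl | hk
  · exact homogeneousComponent_isHomogeneous k A
  · rw [h k hk]
    exact isHomogeneous_zero _ _ _

lemma isHomogeneous_of_gradedPoly_natTrailingDegree_eq {A : MvPolynomial σ R}
    (h : (gradedPoly A).natTrailingDegree = (gradedPoly A).natDegree) :
    A.IsHomogeneous (gradedPoly A).natDegree := by
  refine isHomogeneous_of_forall_ne_homogeneousComponent_eq_zero fun k hk => ?_
  rw [← coeff_gradedPoly]
  rcases hk.lt_or_gt with hlt | hgt
  · exact Polynomial.coeff_eq_zero_of_lt_natTrailingDegree (h ▸ hlt)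
  · exact Polynomial.coeff_eq_zero_of_natDegree_lt hgt

end Grading

lemma IsHomogeneous.exists_of_mul [CommRing R] [IsDomain R] {A B : MvPolynomial σ R} {n : ℕ}
    (hA : A ≠ 0) (hB : B ≠ 0) (h : (A * B).IsHomogeneous n) :
    ∃ a b, a + b = n ∧ A.IsHomogeneous a ∧ B.IsHomogeneous b := by
  classical
  have hψA : gradedPoly A ≠ 0 := (map_ne_zero_iff _ gradedPoly_injective).2 hA
  have hψB : gradedPoly B ≠ 0 := (map_ne_zero_iff _ gradedPoly_injective).2 hB
  have hψ : gradedPoly A * gradedPoly B = Polynomial.monomial n (A * B) := by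
    rw [← map_mul, h.gradedPoly_eq]
  -- Degree and trailing degree both add up to `n`, so each factor has them equal.
  have hdeg := Polynomial.natDegree_mul hψA hψB
  have htrail := Polynomial.natTrailingDegree_mul hψA hψB
  rw [hψ, Polynomial.natDegree_monomial, if_neg (mul_ne_zero hA hB)] at hdeg
  rw [hψ, Polynomial.natTrailingDegree_monomial (mul_ne_zero hA hB)] at htrail
  have := Polynomial.natTrailingDegree_le_natDegree (p := gradedPoly A)
  have := Polynomial.natTrailingDegree_le_natDegree (p := gradedPoly B)
  exact ⟨_, _, hdeg.symm, isHomogeneous_of_gradedPoly_natTrailingDegree_eq (by omega),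
    isHomogeneous_of_gradedPoly_natTrailingDegree_eq (by omega)⟩

lemma IsHomogeneous.eval_smul [CommSemiring R] {φ : MvPolynomial σ R} {n : ℕ}
    (hφ : φ.IsHomogeneous n) (t : R) (v : σ → R) : eval (t • v) φ = t ^ n * eval v φ := by
  rw [eval_eq, eval_eq, Finset.mul_sum]
  refine Finset.sum_congr rfl fun d hd => ?_
  have hdeg : ∑ i ∈ d.support, d i = n := (hφ.degree_eq_sum_deg_support hd).symm
  simp only [Pi.smul_apply, smul_eq_mul, mul_pow, Finset.prod_mul_distrib,
    Finset.prod_pow_eq_pow_sum, hdeg]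
  ring

attribute [local instance] MvPolynomial.gradedAlgebra in
lemma homogeneousComponent_add_mul_of_isHomogeneous [CommSemiring R] {F : MvPolynomial σ R}
    {n : ℕ} (hF : F.IsHomogeneous n) (m : ℕ) (a : MvPolynomial σ R) :
    homogeneousComponent (m + n) (a * F) = homogeneousComponent m a * F := by
  classical
  have := DirectSum.coe_decompose_mul_of_right_mem (homogeneousSubmodule σ R) (m + n) (a := a) hF
  rw [if_pos (Nat.le_add_left n m), Nat.add_sub_cancel] at this
  rw [← decomposition.decompose'_apply, ← decomposition.decompose'_apply]
  exact this

section Field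

variable [Field K]

lemma mem_span_pair_of_mem_ideal_span_pair {F G H : MvPolynomial σ K} {n : ℕ}
    (hF : F.IsHomogeneous n) (hG : G.IsHomogeneous n) (hH : H.IsHomogeneous n)
    (hmem : H ∈ Ideal.span {F, G}) : H ∈ Submodule.span K {F, G} := by
  obtain ⟨a, b, rfl⟩ := Ideal.mem_span_pair.1 hmem
  rw [← homogeneousComponent_eq_self hH, ← zero_add n, map_add,
    homogeneousComponent_add_mul_of_isHomogeneous hF,
    homogeneousComponent_add_mul_of_isHomogeneous hG,
    homogeneousComponent_zero, homogeneousComponent_zero, ← smul_eq_C_mul, ← smul_eq_C_mul]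
  exact Submodule.mem_span_pair.2 ⟨_, _, rfl⟩

lemma isUnit_of_isHomogeneous_zero {A : MvPolynomial σ K} (hA : A.IsHomogeneous 0)
    (hA0 : A ≠ 0) : IsUnit A := by
  rw [← totalDegree_zero_iff_isHomogeneous, totalDegree_eq_zero_iff_eq_C] at hA
  rw [hA] at hA0 ⊢
  exact (Ne.isUnit fun h => hA0 (by rw [h, C_0])).map C

lemma not_dvd_of_linearIndependent {F G : MvPolynomial σ K} {n : ℕ}
    (hF : F.IsHomogeneous n) (hG : G.IsHomogeneous n) (hFG : LinearIndependent K ![F, G]) :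
    ¬ F ∣ G := by
  rintro ⟨q, rfl⟩
  have hF0 : F ≠ 0 := hFG.ne_zero 0
  have hq0 : q ≠ 0 := by rintro rfl; simpa using hFG.ne_zero 1
  obtain ⟨a, b, hab, hFa, hqb⟩ := hG.exists_of_mul hF0 hq0
  obtain rfl : b = 0 := by have := hFa.inj_right hF hF0; omega
  rw [← totalDegree_zero_iff_isHomogeneous, totalDegree_eq_zero_iff_eq_C] at hqb
  have := LinearIndependent.pair_iff.1 hFG (coeff 0 q) (-1)
    (by rw [smul_eq_C_mul, neg_one_smul, ← hqb]; ring)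
  norm_num at this

noncomputable def restrictLine (Q : MvPolynomial σ K) (u w : σ → K) : Polynomial K :=
  aeval (fun i => Polynomial.C (u i) * Polynomial.X + Polynomial.C (w i)) Q

lemma eval_restrictLine (Q : MvPolynomial σ K) (u w : σ → K) (s : K) :
    (restrictLine Q u w).eval s = eval (s • u + w) Q := by
  rw [restrictLine, ← Polynomial.coe_aeval_eq_eval, ← AlgHom.comp_apply, comp_aeval]
  change eval _ Q = _
  congr 2
  funext i
  simp only [map_add, map_mul, Polynomial.aeval_C, Polynomial.aeval_X, Algebra.algebraMap_self,
    RingHom.id_apply, Pi.add_apply, Pi.smul_apply, smul_eq_mul, mul_comm]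

section AlgClosed

variable [IsAlgClosed K]

lemma IsHomogeneous.exists_eval_smul_add_eq_zero {Q : MvPolynomial σ K} {q : ℕ}
    (hQ : Q.IsHomogeneous q) (hq : q ≠ 0) (u w : σ → K) (hu : eval u Q ≠ 0) :
    ∃ s : K, eval (s • u + w) Q = 0 := by
  by_contra! hroot
  obtain ⟨c, hc⟩ : ∃ c, restrictLine Q u w = Polynomial.C c := by
    refine ⟨_, Polynomial.eq_C_of_degree_le_zero (not_lt.1 fun hdeg => ?_)⟩
    obtain ⟨s, hs⟩ := IsAlgClosed.exists_root _ hdeg.ne'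
    exact hroot s (by rwa [← eval_restrictLine])
  -- `Q(u + t • w) = tᵠ Q(t⁻¹ • u + w) = c tᵠ` for `t ≠ 0`, hence also at `t = 0`.
  have hline : restrictLine Q w u = Polynomial.C c * Polynomial.X ^ q := by
    refine Polynomial.eq_of_infinite_eval_eq _ _ <|
      (Set.finite_singleton 0).infinite_compl.mono fun t (ht : t ≠ 0) => ?_
    have : t • w + u = t • (t⁻¹ • u + w) := by
      rw [smul_add, smul_smul, mul_inv_cancel₀ ht, one_smul, add_comm]
    show (restrictLine Q w u).eval t = (Polynomial.C c * Polynomial.X ^ q).eval t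
    rw [eval_restrictLine, this, hQ.eval_smul, ← eval_restrictLine, hc]
    simp only [Polynomial.eval_C, Polynomial.eval_mul, Polynomial.eval_pow, Polynomial.eval_X]
    ring
  apply hu
  simpa [eval_restrictLine, hq] using congrArg (Polynomial.eval 0) hline

lemma IsHomogeneous.exists_mem_ne_zero_eval_eq_zero {Q : MvPolynomial σ K} {q : ℕ}
    (hQ : Q.IsHomogeneous q) (hq : q ≠ 0) {W : Submodule K (σ → K)}
    (hW : 1 < Module.finrank K W) : ∃ v ∈ W, v ≠ 0 ∧ eval v Q = 0 := by
  have : Nontrivial ↥W := Module.nontrivial_of_finrank_pos (R := K) (by omega)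
  obtain ⟨u, hu⟩ := exists_ne (0 : W)
  obtain ⟨w, huw⟩ := exists_linearIndependent_pair_of_one_lt_finrank hW hu
  by_cases hQu : eval (u : σ → K) Q = 0
  · exact ⟨u, u.2, by simpa using hu, hQu⟩
  obtain ⟨s, hs⟩ := hQ.exists_eval_smul_add_eq_zero hq u w hQu
  refine ⟨s • u + w, W.add_mem (W.smul_mem s u.2) w.2, fun h => ?_, hs⟩
  exact one_ne_zero (LinearIndependent.pair_iff.1 huw s 1 (Subtype.ext (by simpa using h))).2

lemma IsHomogeneous.exists_common_nontrivial_zero [Fintype σ] {L Q : MvPolynomial σ K} {q : ℕ}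
    (hL : L.IsHomogeneous 1) (hσ : 2 < Fintype.card σ) (hQ : Q.IsHomogeneous q) (hq : q ≠ 0) :
    ∃ v ≠ 0, eval v L = 0 ∧ eval v Q = 0 := by
  have hspan : L ∈ Submodule.span K (Set.range X) := by
    rwa [← homogeneousSubmodule_one_eq_span_X, mem_homogeneousSubmodule]
  obtain ⟨c, hc⟩ := (Submodule.mem_span_range_iff_exists_fun K).1 hspan
  let ℓ : (σ → K) →ₗ[K] K := ∑ i, c i • LinearMap.proj i
  have hℓ : ∀ v, eval v L = ℓ v := fun v => by simp [ℓ, ← hc, smul_eval]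
  have hker : 1 < Module.finrank K (LinearMap.ker ℓ) := by
    have := ℓ.finrank_range_add_finrank_ker
    have := (LinearMap.range ℓ).finrank_le
    rw [Module.finrank_self] at this
    rw [Module.finrank_fintype_fun_eq_card] at *
    omega
  obtain ⟨v, hv, hv0, hQv⟩ := hQ.exists_mem_ne_zero_eval_eq_zero hq hker
  exact ⟨v, hv0, (hℓ v).trans hv, hQv⟩

end AlgClosed

instance [Finite σ] (n : ℕ) : FiniteDimensional K (homogeneousSubmodule σ K n) :=
  Module.Finite.iff_fg.2 (homogeneousSubmodule_fg σ K n)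

lemma finrank_homogeneousSubmodule [Fintype σ] [DecidableEq σ] (n : ℕ) :
    Module.finrank K (homogeneousSubmodule σ K n) = (Fintype.card σ + n - 1).choose n := by
  have hset : {d : σ →₀ ℕ | d.degree = n} =
      ((Finset.univ : Finset σ).finsuppAntidiag n : Set (σ →₀ ℕ)) := by
    ext d
    simp [Finset.mem_finsuppAntidiag, Finsupp.degree_eq_sum]
  rw [homogeneousSubmodule_eq_finsupp_supported, ← restrictSupport,
    Module.finrank_eq_nat_card_basis (basisRestrictSupport K _), hset,
    Nat.card_coe_set_eq, Set.ncard_coe_finset, Finset.card_finsuppAntidiag_nat_eq_choose,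
    Finset.card_univ]

lemma exists_isHomogeneous_one_eval_eq_zero_ne_zero [Fintype σ] {u v : σ → K}
    (hv : v ∉ K ∙ u) : ∃ L : MvPolynomial σ K, L.IsHomogeneous 1 ∧ eval u L = 0 ∧ eval v L ≠ 0 := by
  classical
  obtain ⟨f, hfv, hfu⟩ := Submodule.exists_le_ker_of_notMem hv
  have hf : ∀ w, eval w (∑ i, C (f (Pi.single i 1)) * X i) = f w := fun w => by
    conv_rhs => rw [← (Pi.basisFun K σ).sum_repr w]
    simp [mul_comm]
  refine ⟨∑ i, C (f (Pi.single i 1)) * X i, IsHomogeneous.sum _ _ _ fun i _ =>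
    isHomogeneous_C_mul_X _ i, ?_, by rwa [hf]⟩
  rw [hf]
  exact hfu (Submodule.mem_span_singleton_self u)

lemma exists_isHomogeneous_eval_eq_zero_ne_zero [Fintype σ] {ι : Type*} [Fintype ι]
    [DecidableEq ι] {p : ι → σ → K} (i : ι) (hp : ∀ j ≠ i, p i ∉ K ∙ p j) :
    ∃ N : MvPolynomial σ K, N.IsHomogeneous (Fintype.card ι - 1) ∧
      (∀ j ≠ i, eval (p j) N = 0) ∧ eval (p i) N ≠ 0 := by
  have : ∀ j, ∃ L : MvPolynomial σ K, L.IsHomogeneous 1 ∧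
      (j ≠ i → eval (p j) L = 0 ∧ eval (p i) L ≠ 0) := fun j => by
    by_cases hj : j = i
    · exact ⟨0, isHomogeneous_zero _ _ _, fun h => (h hj).elim⟩
    · obtain ⟨L, hL, hLj, hLi⟩ := exists_isHomogeneous_one_eval_eq_zero_ne_zero (hp j hj)
      exact ⟨L, hL, fun _ => ⟨hLj, hLi⟩⟩
  choose L hL hLp using this
  refine ⟨∏ j ∈ Finset.univ.erase i, L j, ?_, fun j hj => ?_, ?_⟩
  · simpa [Finset.card_erase_of_mem] using
      IsHomogeneous.prod (Finset.univ.erase i) L (fun _ => 1) fun j _ => hL j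
  · rw [map_prod]
    exact Finset.prod_eq_zero (Finset.mem_erase.2 ⟨hj, Finset.mem_univ j⟩) (hLp j hj).1
  · rw [map_prod, Finset.prod_ne_zero_iff]
    exact fun j hj => (hLp j (Finset.ne_of_mem_erase hj)).2

noncomputable def evalAt {ι : Type*} (p : ι → σ → K) : MvPolynomial σ K →ₗ[K] ι → K :=
  LinearMap.pi fun j => (aeval (p j)).toLinearMap

lemma evalAt_apply {ι : Type*} (p : ι → σ → K) (P : MvPolynomial σ K) (j : ι) :
    evalAt p P j = eval (p j) P := rfl

lemma map_evalAt_homogeneousSubmodule_eq_top [Fintype σ] {ι : Type*} [Fintype ι]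
    {p : ι → σ → K} (hp : ∀ i j, i ≠ j → p i ∉ K ∙ p j) :
    (homogeneousSubmodule σ K (Fintype.card ι - 1)).map (evalAt p) = ⊤ := by
  classical
  rw [eq_top_iff, ← (Pi.basisFun K ι).span_eq, Submodule.span_le]
  rintro _ ⟨i, rfl⟩
  obtain ⟨N, hN, hNj, hNi⟩ :=
    exists_isHomogeneous_eval_eq_zero_ne_zero i fun j hj => hp i j hj.symm
  refine ⟨(eval (p i) N)⁻¹ • N, Submodule.smul_mem _ _ hN, ?_⟩
  ext j
  rcases eq_or_ne j i with rfl | hj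
  · simp [evalAt_apply, smul_eval, hNi]
  · simp [evalAt_apply, smul_eval, hNj j hj, hj]

lemma span_pair_le_inf_ker_evalAt {ι : Type*} {p : ι → σ → K} {F G : MvPolynomial σ K} {n : ℕ}
    (hF : F.IsHomogeneous n) (hG : G.IsHomogeneous n) (hFp : ∀ j, eval (p j) F = 0)
    (hGp : ∀ j, eval (p j) G = 0) :
    Submodule.span K {F, G} ≤ homogeneousSubmodule σ K n ⊓ LinearMap.ker (evalAt p) := by
  have hmem : ∀ Q : MvPolynomial σ K, Q.IsHomogeneous n → (∀ j, eval (p j) Q = 0) →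
      Q ∈ homogeneousSubmodule σ K n ⊓ LinearMap.ker (evalAt p) := fun Q hQ hQp =>
    ⟨hQ, LinearMap.mem_ker.2 (by ext j; exact hQp j)⟩
  rw [Submodule.span_le, Set.insert_subset_iff, Set.singleton_subset_iff]
  exact ⟨hmem F hF hFp, hmem G hG hGp⟩

lemma finrank_map_mulRight {F : MvPolynomial σ K} (hF : F ≠ 0)
    (W : Submodule K (MvPolynomial σ K)) :
    Module.finrank K (W.map (LinearMap.mulRight K F)) = Module.finrank K W :=
  (Submodule.equivMapOfInjective _ (mul_left_injective₀ hF) W).finrank_eq.symm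

lemma map_mulRight_le_inf_ker_evalAt {ι : Type*} {p : ι → σ → K} {F : MvPolynomial σ K} {d : ℕ}
    (hF : F.IsHomogeneous d) (hFp : ∀ j, eval (p j) F = 0) (m : ℕ) :
    (homogeneousSubmodule σ K m).map (LinearMap.mulRight K F) ≤
      homogeneousSubmodule σ K (m + d) ⊓ LinearMap.ker (evalAt p) := by
  rintro _ ⟨a, ha, rfl⟩
  refine ⟨ha.mul hF, LinearMap.mem_ker.2 ?_⟩
  ext j
  simp [evalAt_apply, hFp j]

lemma map_mulRight_inf_range_mulRight_le {F G : MvPolynomial σ K} {e : ℕ}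
    (hG : G.IsHomogeneous e) (hG0 : G ≠ 0) (hFG : IsRelPrime F G) (k : ℕ) :
    (homogeneousSubmodule σ K (k + e)).map (LinearMap.mulRight K F) ⊓
        LinearMap.range (LinearMap.mulRight K G) ≤
      (homogeneousSubmodule σ K k).map (LinearMap.mulRight K (F * G)) := by
  rintro _ ⟨⟨a, ha, rfl⟩, ⟨b, hab⟩⟩
  simp only [LinearMap.mulRight_apply] at hab
  obtain ⟨c, rfl⟩ : G ∣ a := hFG.symm.dvd_of_dvd_mul_right ⟨b, by rw [← hab, mul_comm]⟩
  refine ⟨c, ?_, by simp only [LinearMap.mulRight_apply]; ring⟩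
  rcases eq_or_ne c 0 with rfl | hc
  · exact isHomogeneous_zero _ _ _
  obtain ⟨x, y, hxy, hGx, hcy⟩ := IsHomogeneous.exists_of_mul hG0 hc ha
  obtain rfl := hGx.inj_right hG hG0
  obtain rfl : y = k := by omega
  exact hcy

theorem mem_span_pair_of_isHomogeneous_eight {F G P : MvPolynomial (Fin 3) K}
    (hF : F.IsHomogeneous 3) (hG : G.IsHomogeneous 3) (hF0 : F ≠ 0) (hG0 : G ≠ 0)
    (hFG : IsRelPrime F G) {p : Fin 9 → Fin 3 → K} (hp : ∀ i j, i ≠ j → p i ∉ K ∙ p j)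
    (hFp : ∀ j, eval (p j) F = 0) (hGp : ∀ j, eval (p j) G = 0)
    (hP : P.IsHomogeneous 8) (hPp : ∀ j, eval (p j) P = 0) : P ∈ Ideal.span {F, G} := by
  set W := homogeneousSubmodule (Fin 3) K
  have hW2 : Module.finrank K (W 2) = 6 := by rw [finrank_homogeneousSubmodule]; rfl
  have hW5 : Module.finrank K (W 5) = 21 := by rw [finrank_homogeneousSubmodule]; rfl
  have hW8 : Module.finrank K (W 8) = 45 := by rw [finrank_homogeneousSubmodule]; rfl
  set S := (W 5).map (LinearMap.mulRight K F) ⊔ (W 5).map (LinearMap.mulRight K G)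
  have hS : 36 ≤ Module.finrank K S := by
    have hsum : Module.finrank K S + Module.finrank K ↥((W 5).map (LinearMap.mulRight K F) ⊓
        (W 5).map (LinearMap.mulRight K G)) = _ := Submodule.finrank_sup_add_finrank_inf_eq _ _
    have hinf : Module.finrank K ↥((W 5).map (LinearMap.mulRight K F) ⊓
        (W 5).map (LinearMap.mulRight K G)) ≤
          Module.finrank K ↥((W 2).map (LinearMap.mulRight K (F * G))) :=
      Submodule.finrank_mono <| (inf_le_inf_left _ LinearMap.map_le_range).trans
        (map_mulRight_inf_range_mulRight_le hG hG0 hFG 2)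
    rw [finrank_map_mulRight hF0, finrank_map_mulRight hG0, hW5] at hsum
    rw [finrank_map_mulRight (mul_ne_zero hF0 hG0), hW2] at hinf
    omega
  have hV : Module.finrank K ↥(W 8 ⊓ LinearMap.ker (evalAt p)) ≤ 36 := by
    have hsurj : (W 8).map (evalAt p) = ⊤ := map_evalAt_homogeneousSubmodule_eq_top hp
    have := (W 8).finrank_inf_ker_add_finrank_map (evalAt p)
    rw [hsurj, finrank_top, hW8, Module.finrank_fintype_fun_eq_card, Fintype.card_fin] at this
    omega
  have hSV : S ≤ W 8 ⊓ LinearMap.ker (evalAt p) :=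
    sup_le (map_mulRight_le_inf_ker_evalAt hF hFp 5) (map_mulRight_le_inf_ker_evalAt hG hGp 5)
  have hPS : P ∈ S := (Submodule.eq_of_le_of_finrank_le hSV (hV.trans hS)) ▸
    ⟨hP, LinearMap.mem_ker.2 (by ext j; exact hPp j)⟩
  refine (sup_le ?_ ?_ : S ≤ (Ideal.span {F, G}).restrictScalars K) hPS <;>
    rintro _ ⟨a, -, rfl⟩ <;>
    exact Ideal.mul_mem_left _ a (Ideal.subset_span (by simp))

noncomputable def evalZeroFirst (n : ℕ) :
    MvPolynomial (Fin (n + 1)) K →+* MvPolynomial (Fin n) K :=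
  Polynomial.constantCoeff.comp (finSuccEquiv K n).toRingHom

lemma evalZeroFirst_X_zero (n : ℕ) : evalZeroFirst n (X 0 : MvPolynomial _ K) = 0 := by
  simp [evalZeroFirst, finSuccEquiv_X_zero]

lemma evalZeroFirst_X_succ {n : ℕ} (j : Fin n) :
    evalZeroFirst n (X j.succ : MvPolynomial _ K) = X j := by
  simp [evalZeroFirst, finSuccEquiv_X_succ]

lemma evalZeroFirst_surjective (n : ℕ) : Function.Surjective (evalZeroFirst (K := K) n) :=
  fun p => ⟨(finSuccEquiv K n).symm (Polynomial.C p), by simp [evalZeroFirst]⟩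

lemma X_zero_dvd_iff {n : ℕ} {P : MvPolynomial (Fin (n + 1)) K} :
    X 0 ∣ P ↔ evalZeroFirst n P = 0 := by
  rw [evalZeroFirst, RingHom.comp_apply, Polynomial.constantCoeff_apply, ← Polynomial.X_dvd_iff,
    ← finSuccEquiv_X_zero (R := K)]
  exact (map_dvd_iff (finSuccEquiv K n)).symm

lemma isRelPrime_X_zero_X_one : IsRelPrime (X 0 : MvPolynomial (Fin 2) K) (X 1) := by
  have hprime : Prime (X 0 : MvPolynomial (Fin 2) K) :=
    ⟨X_ne_zero 0, fun hu => by simpa using hu.dvd (a := X 1), fun _ _ => X_dvd_mul_iff.1⟩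
  exact hprime.irreducible.isRelPrime_iff_not_dvd.2 (by simp)

lemma exists_eq_mul_add_X_zero_mul {F b c₁ c₂ : MvPolynomial (Fin 3) K}
    (h₁ : F ∣ X 1 * b - X 0 * c₁) (h₂ : F ∣ X 2 * b - X 0 * c₂) :
    ∃ e b', b = F * e + X 0 * b' := by
  have h₁' := map_dvd (evalZeroFirst 2) h₁
  have h₂' := map_dvd (evalZeroFirst 2) h₂
  simp only [map_sub, map_mul, evalZeroFirst_X_zero, zero_mul, sub_zero] at h₁' h₂'
  rw [show (1 : Fin 3) = Fin.succ 0 from rfl, evalZeroFirst_X_succ] at h₁'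
  rw [show (2 : Fin 3) = Fin.succ 1 from rfl, evalZeroFirst_X_succ] at h₂'
  obtain ⟨e', he'⟩ := dvd_of_dvd_mul_of_dvd_mul_of_isRelPrime h₁' h₂' isRelPrime_X_zero_X_one
  obtain ⟨e, rfl⟩ := evalZeroFirst_surjective 2 e'
  obtain ⟨b', hb'⟩ := X_zero_dvd_iff.2 (show evalZeroFirst 2 (b - F * e) = 0 by simp [he'])
  exact ⟨e, b', by linear_combination hb'⟩

theorem mem_span_pair_of_forall_X_mul_mem {F G H : MvPolynomial (Fin 3) K} (hXF : ¬ X 0 ∣ F)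
    (hFG : IsRelPrime F G) (hH : ∀ i, X i * H ∈ Ideal.span {F, G}) :
    H ∈ Ideal.span {F, G} := by
  choose a b hab using fun i => Ideal.mem_span_pair.1 (hH i)
  have syzygy : ∀ i j, F ∣ X j * b i - X i * b j := fun i j =>
    hFG.dvd_of_dvd_mul_left
      ⟨X i * a j - X j * a i, by linear_combination X j * hab i - X i * hab j⟩
  obtain ⟨e, b', hb⟩ := exists_eq_mul_add_X_zero_mul (syzygy 0 1) (syzygy 0 2)
  have hX : X 0 * (H - b' * G) = (a 0 + e * G) * F := by linear_combination -hab 0 + G * hb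
  obtain ⟨a', ha'⟩ := (X_dvd_mul_iff.1 ⟨_, hX.symm⟩).resolve_right hXF
  refine Ideal.mem_span_pair.2 ⟨a', b', ?_⟩
  have := hX.trans (by rw [ha']; ring : _ = X 0 * (a' * F))
  linear_combination -(mul_left_cancel₀ (X_ne_zero 0) this)

theorem mem_span_pair_of_forall_monomial_mul_mem {F G : MvPolynomial (Fin 3) K}
    (hXF : ¬ X 0 ∣ F) (hFG : IsRelPrime F G) (k : ℕ) {H : MvPolynomial (Fin 3) K}
    (hH : ∀ d : Fin 3 →₀ ℕ, d.degree = k → monomial d 1 * H ∈ Ideal.span {F, G}) :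
    H ∈ Ideal.span {F, G} := by
  induction k generalizing H with
  | zero => simpa using hH 0 (by simp)
  | succ k ih =>
    refine mem_span_pair_of_forall_X_mul_mem hXF hFG fun i => ih fun d hd => ?_
    rw [← mul_assoc, X, monomial_mul, one_mul]
    exact hH _ (by simp [hd])

end Field

end MvPolynomial

section PlaneCubic

variable {F G : MvPolynomial (Fin 3) ℂ}

lemma grad_mul_eq_zero {A B : MvPolynomial (Fin 3) ℂ} {v : Fin 3 → ℂ} (hA : eval v A = 0)
    (hB : eval v B = 0) : grad (A * B) v = 0 := by
  funext i
  simp [grad, hA, hB]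

namespace SmoothCubic

lemma ne_mul (hF : SmoothCubic F) {L Q : MvPolynomial (Fin 3) ℂ} {q : ℕ}
    (hL : L.IsHomogeneous 1) (hQ : Q.IsHomogeneous q) (hq : q ≠ 0) : F ≠ L * Q := by
  rintro rfl
  obtain ⟨v, hv0, hLv, hQv⟩ := hL.exists_common_nontrivial_zero (by simp) hQ hq
  exact hv0 (hF.2 v (grad_mul_eq_zero hLv hQv))

lemma not_X_dvd (hF : SmoothCubic F) (i : Fin 3) : ¬ X i ∣ F := by
  rintro ⟨Q, hQ⟩
  have hQ0 : Q ≠ 0 := by rintro rfl; exact hF.1.1 (by simpa using hQ)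
  obtain ⟨a, b, hab, hXa, hQb⟩ := (hQ ▸ hF.1.2).exists_of_mul (X_ne_zero i) hQ0
  have := hXa.inj_right (isHomogeneous_X ℂ i) (X_ne_zero i)
  exact hF.ne_mul (isHomogeneous_X ℂ i) hQb (by omega) hQ

theorem irreducible (hF : SmoothCubic F) : Irreducible F := by
  refine ⟨fun hu => ?_, fun A B hAB => ?_⟩
  · obtain ⟨c, -, hc⟩ := isUnit_iff_eq_C_of_isReduced.1 hu
    have := (hc ▸ isHomogeneous_C (Fin 3) c).inj_right hF.1.2 hF.1.1
    omega
  have hA0 : A ≠ 0 := by rintro rfl; exact hF.1.1 (by simpa using hAB)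
  have hB0 : B ≠ 0 := by rintro rfl; exact hF.1.1 (by simpa using hAB)
  obtain ⟨a, b, hab, hA, hB⟩ := (hAB ▸ hF.1.2).exists_of_mul hA0 hB0
  by_contra! hnu
  have ha : a ≠ 0 := by rintro rfl; exact hnu.1 (isUnit_of_isHomogeneous_zero hA hA0)
  have hb : b ≠ 0 := by rintro rfl; exact hnu.2 (isUnit_of_isHomogeneous_zero hB hB0)
  obtain rfl | rfl : a = 1 ∨ b = 1 := by omega
  · exact hF.ne_mul hA hB hb hAB
  · exact hF.ne_mul hB hA ha (hAB.trans (mul_comm A B))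

end SmoothCubic

noncomputable def gradAt (v : Fin 3 → ℂ) : MvPolynomial (Fin 3) ℂ →ₗ[ℂ] Fin 3 → ℂ :=
  LinearMap.pi fun i => (aeval v).toLinearMap ∘ₗ (pderiv i).toLinearMap

lemma Transverse.linearIndependent {v : Fin 3 → ℂ} (h : Transverse F G v) :
    LinearIndependent ℂ ![F, G] := by
  have : gradAt v ∘ ![F, G] = ![grad F v, grad G v] := by
    ext i : 1
    fin_cases i <;> rfl
  exact .of_comp (gradAt v) (this ▸ h)

lemma Transverse.isRelPrime {v : Fin 3 → ℂ} (hF : SmoothCubic F) (hG : G.IsHomogeneous 3)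
    (h : Transverse F G v) : IsRelPrime F G :=
  hF.irreducible.isRelPrime_iff_not_dvd.2
    (not_dvd_of_linearIndependent hF.1.2 hG h.linearIndependent)

lemma NinePoints.notMem_span_singleton {p : Fin 9 → Fin 3 → ℂ} (hp : NinePoints F G p)
    {i j : Fin 9} (hij : i ≠ j) : p i ∉ ℂ ∙ p j := by
  rintro hmem
  obtain ⟨c, hc⟩ := Submodule.mem_span_singleton.1 hmem
  exact hp.2.1 j i hij.symm ⟨c, by rintro rfl; exact hp.1 i (by rw [← hc, zero_smul]), hc⟩

end PlaneCubic

/-- The vector space of homogeneous degree-3 polynomials vanishing at the nine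
transversal intersection points of two smooth cubics `F`, `G` is exactly the
two-dimensional span of `F` and `G`. -/
theorem cubics_through_nine_points_eq_pencil
    (F G : MvPolynomial (Fin 3) ℂ) (hF : SmoothCubic F) (hG : SmoothCubic G)
    (p : Fin 9 → Fin 3 → ℂ) (hp : NinePoints F G p)
    (htrans : ∀ i, Transverse F G (p i)) :
    {H : MvPolynomial (Fin 3) ℂ | H.IsHomogeneous 3 ∧ ∀ i, eval (p i) H = 0}
      = (Submodule.span ℂ {F, G} : Set (MvPolynomial (Fin 3) ℂ)) ∧
    LinearIndependent ℂ ![F, G] := by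
  have hFG : IsRelPrime F G := (htrans 0).isRelPrime hF hG.1.2
  have hFp j := (hp.2.2.1 j).1
  have hGp j := (hp.2.2.1 j).2
  have hcubics : homogeneousSubmodule (Fin 3) ℂ 3 ⊓ LinearMap.ker (evalAt p) =
      Submodule.span ℂ {F, G} := by
    refine le_antisymm (fun H ⟨hH, hHp⟩ => ?_) (span_pair_le_inf_ker_evalAt hF.1.2 hG.1.2 hFp hGp)
    have hHp j : eval (p j) H = 0 := congrFun (LinearMap.mem_ker.1 hHp) j
    refine mem_span_pair_of_mem_ideal_span_pair hF.1.2 hG.1.2 hH <|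
      mem_span_pair_of_forall_monomial_mul_mem (hF.not_X_dvd 0) hFG 5 fun d hd => ?_
    exact mem_span_pair_of_isHomogeneous_eight hF.1.2 hG.1.2 hF.1.1 hG.1.1 hFG
      (fun i j => hp.notMem_span_singleton) hFp hGp ((isHomogeneous_monomial 1 hd).mul hH)
      (fun j => by rw [map_mul, hHp j, mul_zero])
  refine ⟨?_, (htrans 0).linearIndependent⟩
  rw [← hcubics]
  ext H
  simp only [Set.mem_ofPred_eq, SetLike.mem_coe, Submodule.mem_inf, mem_homogeneousSubmodule,
    LinearMap.mem_ker, _root_.funext_iff, evalAt_apply, Pi.zero_apply]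
end

section
/- Let F and G be smooth cubics in ℂ[X,Y,Z] whose common projective zero set consists of exactly nine distinct points of ℙ², with F and G meeting transversally at each of these points. Then for all but finitely many λ ∈ ℂ, the cubic F + λG is smooth. -/
open MvPolynomial

/-!
Since `F` is smooth, the Nullstellensatz puts a power of the irrelevant ideal, hence every form of
some degree `D`, into the Jacobian ideal of `F`: the linear map `a ↦ (∑ aᵢ ∂ᵢF)_D` onto the forms
of degree `D` is surjective. For `F + tG` this map is `f + t g`, and if `s` is a right inverse of
`f`, then `f + t g` fails to be surjective only when `-t⁻¹` is an eigenvalue of `g ∘ s`. Surjectivity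
in turn excludes singular points: at a common zero `v ≠ 0` of the partials, say `vⱼ ≠ 0`, the form
`Xⱼ ^ D` would lie in the (homogeneous) Jacobian ideal and so vanish at `v`.
-/

theorem LinearMap.finite_setOf_not_surjective_add_smul {K M W : Type*} [Field K]
    [AddCommGroup M] [Module K M] [AddCommGroup W] [Module K W] [FiniteDimensional K W]
    {f : M →ₗ[K] W} (hf : Function.Surjective f) (g : M →ₗ[K] W) :
    {t : K | ¬ Function.Surjective (f + t • g)}.Finite := by
  obtain ⟨s, hs⟩ := f.exists_rightInverse_of_surjective (LinearMap.range_eq_top.2 hf)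
  refine ((Module.End.finite_hasEigenvalue (g ∘ₗ s)).image fun μ => -μ⁻¹).subset fun t ht => ?_
  have hfs : ∀ w, f (s w) = w := LinearMap.congr_fun hs
  have hinj : ¬ Function.Injective ((f + t • g) ∘ₗ s) := fun h =>
    ht (Function.Surjective.of_comp (g := s) (LinearMap.injective_iff_surjective.1 h))
  rw [injective_iff_map_eq_zero] at hinj
  push Not at hinj
  obtain ⟨w, hw, hw0⟩ := hinj
  simp only [LinearMap.comp_apply, LinearMap.add_apply, LinearMap.smul_apply, hfs] at hw
  have ht0 : t ≠ 0 := by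
    rintro rfl
    exact hw0 (by simpa using hw)
  refine ⟨-t⁻¹, Module.End.hasEigenvalue_of_hasEigenvector ⟨?_, hw0⟩, by simp⟩
  rw [Module.End.mem_eigenspace_iff, LinearMap.comp_apply]
  calc g (s w) = t⁻¹ • t • g (s w) := (inv_smul_smul₀ ht0 _).symm
    _ = -t⁻¹ • w := by rw [eq_neg_of_add_eq_zero_right hw, smul_neg, neg_smul]

namespace MvPolynomial

variable {σ ι R : Type*}

theorem exists_pow_idealOfVars_le_of_zeroLocus_subset {K : Type*} [Field K] [IsAlgClosed K]
    [Finite σ] {I : Ideal (MvPolynomial σ K)} (hI : zeroLocus K I ⊆ {0}) :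
    ∃ N, idealOfVars σ K ^ N ≤ I := by
  refine Ideal.exists_pow_le_of_le_radical_of_fg ?_ (idealOfVars_fg σ K)
  rw [← vanishingIdeal_zeroLocus_eq_radical (K := K), idealOfVars, Ideal.span_le]
  rintro _ ⟨i, rfl⟩
  exact mem_vanishingIdeal_iff.2 fun x hx => by simp [Set.mem_singleton_iff.1 (hI hx)]

theorem IsHomogeneous.mem_pow_idealOfVars [CommSemiring R] {p : MvPolynomial σ R} {n : ℕ}
    (hp : p.IsHomogeneous n) : p ∈ idealOfVars σ R ^ n :=
  (mem_pow_idealOfVars_iff n p).2 fun d hd => by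
    rw [Finsupp.degree_eq_weight_one]
    exact (hp (mem_support_iff.1 hd)).ge

instance {K : Type*} [Field K] [Finite σ] (n : ℕ) :
    FiniteDimensional K (homogeneousSubmodule σ K n) :=
  Submodule.finiteDimensional_of_le (S₂ := restrictTotalDegree σ K n) fun _ hp =>
    (mem_restrictTotalDegree _ _ _).2 (IsHomogeneous.totalDegree_le hp)

variable [CommSemiring R] [Fintype ι]

noncomputable def combinationComponent (D : ℕ) (P : ι → MvPolynomial σ R) :
    (ι → MvPolynomial σ R) →ₗ[R] homogeneousSubmodule σ R D :=
  LinearMap.codRestrict _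
    ((homogeneousComponent D).comp
      ((Fintype.linearCombination (MvPolynomial σ R) P).restrictScalars R))
    fun _ => homogeneousComponent_mem _ _

@[simp]
theorem coe_combinationComponent_apply (D : ℕ) (P a : ι → MvPolynomial σ R) :
    (combinationComponent D P a : MvPolynomial σ R) = homogeneousComponent D (∑ i, a i * P i) := by
  simp [combinationComponent, Fintype.linearCombination_apply]

theorem combinationComponent_add_smul (D : ℕ) (P Q : ι → MvPolynomial σ R) (t : R) :
    combinationComponent D (P + t • Q) = combinationComponent D P + t • combinationComponent D Q := by
  ext a : 2
  simp [mul_add, Finset.sum_add_distrib, Finset.smul_sum]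

theorem surjective_combinationComponent_of_pow_idealOfVars_le {D : ℕ} {P : ι → MvPolynomial σ R}
    (hD : idealOfVars σ R ^ D ≤ Ideal.span (Set.range P)) :
    Function.Surjective (combinationComponent D P) := by
  rintro ⟨w, hw⟩
  obtain ⟨a, rfl⟩ := (Submodule.mem_span_range_iff_exists_fun _).1
    (hD (IsHomogeneous.mem_pow_idealOfVars hw))
  refine ⟨a, Subtype.ext ?_⟩
  simp only [coe_combinationComponent_apply, ← smul_eq_mul]
  exact homogeneousComponent_eq_self hw

attribute [local instance] gradedAlgebra in
theorem eq_zero_of_surjective_combinationComponent [IsReduced R] {m D : ℕ}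
    {P : ι → MvPolynomial σ R} (hP : ∀ i, (P i).IsHomogeneous m)
    (hsurj : Function.Surjective (combinationComponent D P)) {v : σ → R}
    (hv : ∀ i, eval v (P i) = 0) : v = 0 := by
  have hker : Ideal.span (Set.range P) ≤ RingHom.ker (eval v) :=
    Ideal.span_le.2 (Set.range_subset_iff.2 hv)
  have hhom : (Ideal.span (Set.range P)).IsHomogeneous (homogeneousSubmodule σ R) :=
    Ideal.homogeneous_span _ _ (Set.forall_mem_range.2 fun i => ⟨m, hP i⟩)
  funext j
  obtain ⟨a, ha⟩ := hsurj ⟨X j ^ D, isHomogeneous_X_pow j D⟩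
  have hXj : X j ^ D ∈ Ideal.span (Set.range P) := by
    have hXj_eq : X j ^ D = homogeneousComponent D (∑ i, a i * P i) := by
      rw [← coe_combinationComponent_apply, ha]
    rw [hXj_eq]
    exact homogeneousComponent_mem_of_mem hhom
      (Ideal.sum_mem _ fun i _ => Ideal.mul_mem_left _ _ (Ideal.subset_span ⟨i, rfl⟩)) D
  have hvj : v j ^ D = 0 := by simpa using hker hXj
  exact IsNilpotent.eq_zero ⟨D, hvj⟩

end MvPolynomial

theorem smoothCubic_of_surjective_combinationComponent {H : MvPolynomial (Fin 3) ℂ}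
    (hH : H.IsHomogeneous 3) {D : ℕ}
    (hsurj : Function.Surjective (combinationComponent D fun i => pderiv i H)) :
    SmoothCubic H := by
  have hsing : ∀ v, grad H v = 0 → v = 0 := fun v hv =>
    eq_zero_of_surjective_combinationComponent (fun i => hH.pderiv) hsurj (congrFun hv)
  refine ⟨⟨fun h0 => ?_, hH⟩, hsing⟩
  have := congrFun (hsing 1 (funext fun i => by simp [grad, h0])) 0
  simp at this

theorem pencil_member_smooth_for_all_but_finitely_many_general
    (F G : MvPolynomial (Fin 3) ℂ) (hF : SmoothCubic F) (hG : SmoothCubic G) :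
    {t : ℂ | ¬ SmoothCubic (F + C t * G)}.Finite := by
  have hjacobian : zeroLocus ℂ (Ideal.span (Set.range fun i => pderiv i F)) ⊆ {0} := fun v hv =>
    hF.2 v (funext fun i => by simpa [grad] using hv _ (Ideal.subset_span ⟨i, rfl⟩))
  obtain ⟨D, hD⟩ := exists_pow_idealOfVars_le_of_zeroLocus_subset hjacobian
  refine (LinearMap.finite_setOf_not_surjective_add_smul
    (surjective_combinationComponent_of_pow_idealOfVars_le hD)
    (combinationComponent D fun i => pderiv i G)).subset fun t ht hsurj => ht ?_
  have hpderiv : (fun i => pderiv i (F + C t * G)) =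
      (fun i => pderiv i F) + t • fun i => pderiv i G := by
    ext1 i
    simp [smul_eq_C_mul]
  rw [← combinationComponent_add_smul, ← hpderiv] at hsurj
  exact smoothCubic_of_surjective_combinationComponent (hF.1.2.add (hG.1.2.C_mul t)) hsurj

/-- For all but finitely many `t ∈ ℂ`, the member `F + t • G` of the pencil
spanned by two smooth cubics meeting transversally in nine points is a smooth
cubic. -/
theorem pencil_member_smooth_for_all_but_finitely_many
    (F G : MvPolynomial (Fin 3) ℂ) (hF : SmoothCubic F) (hG : SmoothCubic G)
    (p : Fin 9 → Fin 3 → ℂ) (hp : NinePoints F G p)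
    (htrans : ∀ i, Transverse F G (p i)) :
    {t : ℂ | ¬ SmoothCubic (F + C t * G)}.Finite :=
  pencil_member_smooth_for_all_but_finitely_many_general F G hF hG
end

section
/- Let A = ℂ[Y₁,Y₂,Y₃]/(Y₁² + Y₂² − Y₃²) and let σ be the ℂ-algebra automorphism of A induced by Yᵢ ↦ −Yᵢ for i = 1,2,3. Let B = ℂ[u,v] and let τ be the ℂ-algebra automorphism of B determined by u ↦ iu, v ↦ iv (where i is a primitive fourth root of unity in ℂ). Then the fixed subalgebra of A under σ is isomorphic as a ℂ-algebra to the fixed subalgebra of B under τ. (This is the algebraic content of the assertion that the bidouble cover of ℂ² branched over three smooth curves through a common point with pairwise transverse intersections has a cyclic quotient singularity of type ¼(1,1).) -/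
/-!
Over `ℂ` the cone is `(Y₀ + iY₁)(Y₀ - iY₁) = Y₂²`, parametrized by `Y₀ + iY₁ = 2u²`,
`Y₀ - iY₁ = 2v²`, `Y₂ = 2uv`. This gives a map `A → ℂ[u,v]`, injective because `A` is free over
`ℂ[Y₀, Y₁]` with basis `1, Y₂` while the images of `ℂ[Y₀, Y₁]` and of `Y₂` are even, resp. odd,
under `u ↦ -u`. Its image contains `ℂ[u², uv, v²]`, and since the `Yᵢ` go to quadrics it
intertwines `σ` with `τ`. A `τ`-invariant is invariant under `τ²`, which is `-1` on `u, v`, so it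
lies in `ℂ[u², uv, v²]`; hence the map restricts to an isomorphism of the invariant subalgebras.
-/

open MvPolynomial

/-- The fixed subalgebra of a `ℂ`-algebra automorphism. -/
def fixedSubalgebra {R : Type*} [CommSemiring R] [Algebra ℂ R]
    (φ : R ≃ₐ[ℂ] R) : Subalgebra ℂ R :=
  AlgHom.equalizer (φ : R →ₐ[ℂ] R) (AlgHom.id ℂ R)

/-- The quotient `A = ℂ[Y₁,Y₂,Y₃]/(Y₁² + Y₂² − Y₃²)`. -/
abbrev ConeAlg : Type :=
  MvPolynomial (Fin 3) ℂ ⧸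
    Ideal.span ({X 0 ^ 2 + X 1 ^ 2 - X 2 ^ 2} : Set (MvPolynomial (Fin 3) ℂ))

section FixedSubalgebra

variable {A B : Type*} [CommSemiring A] [CommSemiring B] [Algebra ℂ A] [Algebra ℂ B]
  {σ : A ≃ₐ[ℂ] A} {τ : B ≃ₐ[ℂ] B} {f : A →ₐ[ℂ] B}

theorem mem_fixedSubalgebra_iff {φ : A ≃ₐ[ℂ] A} {x : A} : x ∈ fixedSubalgebra φ ↔ φ x = x :=
  AlgHom.mem_equalizer _ _ _

theorem map_fixedSubalgebra_eq (hf : Function.Injective f) (hfσ : ∀ x, f (σ x) = τ (f x))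
    (hτ : fixedSubalgebra τ ≤ f.range) : (fixedSubalgebra σ).map f = fixedSubalgebra τ := by
  ext y
  simp only [Subalgebra.mem_map, mem_fixedSubalgebra_iff]
  constructor
  · rintro ⟨x, hx, rfl⟩
    rw [← hfσ, hx]
  · intro hy
    obtain ⟨x, rfl⟩ := hτ (mem_fixedSubalgebra_iff.mpr hy)
    exact ⟨x, hf (by rw [hfσ]; exact hy), rfl⟩

noncomputable def fixedSubalgebraEquivOfInjective (hf : Function.Injective f)
    (hfσ : ∀ x, f (σ x) = τ (f x)) (hτ : fixedSubalgebra τ ≤ f.range) :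
    fixedSubalgebra σ ≃ₐ[ℂ] fixedSubalgebra τ :=
  ((fixedSubalgebra σ).equivMapOfInjective f hf).trans
    (Subalgebra.equivOfEq _ _ (map_fixedSubalgebra_eq hf hfσ hτ))

end FixedSubalgebra

section EvenSubalgebra

variable {σ R : Type*} [CommRing R] [IsDomain R] [CharZero R]

theorem MvPolynomial.mem_adjoin_X_mul_X_of_map_X_eq_neg
    (ρ : MvPolynomial σ R →ₐ[R] MvPolynomial σ R) (hρ : ∀ i, ρ (X i) = -X i)
    {p : MvPolynomial σ R} (hp : ρ p = p) :
    p ∈ Algebra.adjoin R (Set.range fun ij : σ × σ => (X ij.1 * X ij.2 : MvPolynomial σ R)) := by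
  set S := Algebra.adjoin R (Set.range fun ij : σ × σ => (X ij.1 * X ij.2 : MvPolynomial σ R))
  have hXX : ∀ i j, (X i * X j : MvPolynomial σ R) ∈ S :=
    fun i j => Algebra.subset_adjoin ⟨(i, j), rfl⟩
  have hρS : ∀ s ∈ S, ρ s = s := by
    refine fun s hs => (Algebra.adjoin_le (S := AlgHom.equalizer ρ (AlgHom.id R _)) ?_ hs)
    rintro _ ⟨ij, rfl⟩
    simp [hρ]
  -- every polynomial is `s + o` with `s` even and `o` odd, `o * X i` being even again
  have hdecomp : ∀ q : MvPolynomial σ R,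
      ∃ s ∈ S, ∃ o, ρ o = -o ∧ (∀ i, o * X i ∈ S) ∧ q = s + o := by
    intro q
    induction q using MvPolynomial.induction_on with
    | C a => exact ⟨C a, Subalgebra.algebraMap_mem S a, 0, by simp, by simp, by simp⟩
    | add q₁ q₂ ih₁ ih₂ =>
      obtain ⟨s₁, hs₁, o₁, hρo₁, ho₁, rfl⟩ := ih₁
      obtain ⟨s₂, hs₂, o₂, hρo₂, ho₂, rfl⟩ := ih₂
      refine ⟨s₁ + s₂, add_mem hs₁ hs₂, o₁ + o₂, by simp [hρo₁, hρo₂, add_comm],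
        fun i => by simpa [add_mul] using add_mem (ho₁ i) (ho₂ i), by ring⟩
    | mul_X q i ih =>
      obtain ⟨s, hs, o, hρo, ho, rfl⟩ := ih
      refine ⟨o * X i, ho i, s * X i, by simp [hρS s hs, hρ], fun j => ?_, by ring⟩
      simpa [mul_assoc] using mul_mem hs (hXX i j)
  obtain ⟨s, hs, o, hρo, -, rfl⟩ := hdecomp p
  have ho : o = 0 := by
    rw [map_add, hρS s hs, hρo] at hp
    exact add_self_eq_zero.mp (by linear_combination -hp)
  simpa [ho] using hs

end EvenSubalgebra

theorem MvPolynomial.aeval_injective_of_surjective_eval {σ τ K : Type*} [Field K] [Infinite K]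
    (v : σ → MvPolynomial τ K) (hv : Function.Surjective fun x : τ → K => fun i => eval x (v i)) :
    Function.Injective (aeval v : MvPolynomial σ K →ₐ[K] MvPolynomial τ K) := by
  intro p q hpq
  refine MvPolynomial.funext fun y => ?_
  obtain ⟨x, rfl⟩ := hv y
  have := congrArg (aeval x) hpq
  rw [aeval_eq_bind₁, aeval_bind₁, aeval_bind₁] at this
  exact this

section Polynomial

open Polynomial

theorem Polynomial.ker_eval₂RingHom_X_sq_sub_C {R S : Type*} [CommRing R] [Nontrivial R]
    [CommRing S] (f : R →+* S) (s : R) (t : S) (ht : t ^ 2 = f s)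
    (hsep : ∀ a b, f a + f b * t = 0 → a = 0 ∧ b = 0) :
    RingHom.ker (eval₂RingHom f t) = Ideal.span {X ^ 2 - C s} := by
  have hq : (X ^ 2 - C s).Monic := monic_X_pow_sub_C s two_ne_zero
  refine le_antisymm (fun p hp => ?_) ?_
  · have hdeg : (p %ₘ (X ^ 2 - C s)).degree ≤ 1 := by
      have := degree_modByMonic_lt p hq
      rw [degree_X_pow_sub_C two_pos] at this
      exact Order.le_of_lt_succ this
    set r := p %ₘ (X ^ 2 - C s)
    have hr : eval₂ f t r = 0 := by
      rw [← modByMonic_add_div p (X ^ 2 - C s), RingHom.mem_ker, coe_eval₂RingHom] at hp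
      simpa [ht] using hp
    rw [eq_X_add_C_of_degree_le_one hdeg] at hr
    obtain ⟨h0, h1⟩ := hsep (r.coeff 0) (r.coeff 1) (by simpa [add_comm] using hr)
    rw [Ideal.mem_span_singleton, ← modByMonic_eq_zero_iff_dvd hq]
    change r = 0
    rw [eq_X_add_C_of_degree_le_one hdeg, h0, h1]
    simp
  · rw [Ideal.span_le, Set.singleton_subset_iff]
    simp [ht]

end Polynomial

noncomputable section

namespace ConeAlg

open Complex (I I_sq)

local notation "ℂ[u,v]" => MvPolynomial (Fin 2) ℂ

theorem C_I_sq : (C I : ℂ[u,v]) ^ 2 = -1 := by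
  rw [← C_pow, I_sq, C_neg, C_1]

def param : Fin 3 → ℂ[u,v] :=
  ![X 0 ^ 2 + X 1 ^ 2, C I * (X 1 ^ 2 - X 0 ^ 2), 2 * (X 0 * X 1)]

def baseParam : Fin 2 → ℂ[u,v] :=
  ![X 0 ^ 2 + X 1 ^ 2, C I * (X 1 ^ 2 - X 0 ^ 2)]

theorem aeval_param_cone :
    aeval param (X 0 ^ 2 + X 1 ^ 2 - X 2 ^ 2 : MvPolynomial (Fin 3) ℂ) = 0 := by
  simp only [param, map_add, map_sub, map_pow, aeval_X, Matrix.cons_val]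
  linear_combination (X 1 ^ 2 - X 0 ^ 2) ^ 2 * C_I_sq

theorem surjective_eval_baseParam :
    Function.Surjective fun x : Fin 2 → ℂ => fun i => eval x (baseParam i) := by
  intro y
  obtain ⟨a, ha⟩ := IsAlgClosed.exists_eq_mul_self ((y 0 + I * y 1) / 2)
  obtain ⟨b, hb⟩ := IsAlgClosed.exists_eq_mul_self ((y 0 - I * y 1) / 2)
  refine ⟨![a, b], funext fun i => ?_⟩
  fin_cases i
  · simp [baseParam]
    linear_combination -ha - hb
  · simp [baseParam]
    linear_combination I * ha - I * hb - y 1 * I_sq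

theorem aeval_baseParam_injective :
    Function.Injective (aeval baseParam : MvPolynomial (Fin 2) ℂ →ₐ[ℂ] ℂ[u,v]) :=
  aeval_injective_of_surjective_eval _ surjective_eval_baseParam

theorem eq_zero_of_aeval_baseParam_add_mul_eq_zero {a b : MvPolynomial (Fin 2) ℂ}
    (h : aeval baseParam a + aeval baseParam b * (2 * (X 0 * X 1)) = 0) : a = 0 ∧ b = 0 := by
  -- the reflection `u ↦ -u` fixes the image of `aeval baseParam` and negates `uv`
  set ε : ℂ[u,v] →ₐ[ℂ] ℂ[u,v] := aeval ![-X 0, X 1]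
  have hε : ε.comp (aeval baseParam) = aeval baseParam := by
    ext i
    fin_cases i <;> simp [ε, baseParam]
  have hεa : ∀ c, ε (aeval baseParam c) = aeval baseParam c := fun c => congrArg (· c) hε
  have h' := congrArg ε h
  simp only [map_add, map_mul, hεa, map_ofNat, map_zero, ε, aeval_X, Matrix.cons_val] at h'
  have ha : aeval baseParam a = 0 := add_self_eq_zero.mp (by linear_combination h + h')
  have huv : (2 * (X 0 * X 1) : ℂ[u,v]) ≠ 0 :=
    mul_ne_zero two_ne_zero (mul_ne_zero (X_ne_zero _) (X_ne_zero _))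
  rw [ha, zero_add, mul_eq_zero, or_iff_left huv] at h
  exact ⟨aeval_baseParam_injective (by rw [ha, map_zero]),
    aeval_baseParam_injective (by rw [h, map_zero])⟩

def lastVarEquiv : MvPolynomial (Fin 3) ℂ ≃ₐ[ℂ] Polynomial ℂ[u,v] :=
  (renameEquiv ℂ (finSuccEquiv' (Fin.last 2))).trans (optionEquivLeft ℂ (Fin 2))

theorem lastVarEquiv_X_zero : lastVarEquiv (X 0) = Polynomial.C (X 0) := by
  rw [lastVarEquiv, AlgEquiv.trans_apply, renameEquiv_apply, rename_X]
  exact optionEquivLeft_X_some ℂ (Fin 2) 0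

theorem lastVarEquiv_X_one : lastVarEquiv (X 1) = Polynomial.C (X 1) := by
  rw [lastVarEquiv, AlgEquiv.trans_apply, renameEquiv_apply, rename_X]
  exact optionEquivLeft_X_some ℂ (Fin 2) 1

theorem lastVarEquiv_X_two : lastVarEquiv (X 2) = Polynomial.X := by
  rw [lastVarEquiv, AlgEquiv.trans_apply, renameEquiv_apply, rename_X]
  exact optionEquivLeft_X_none ℂ (Fin 2)

theorem aeval_param_eq_comp_lastVarEquiv :
    (aeval (R := ℂ) param : MvPolynomial (Fin 3) ℂ →+* ℂ[u,v]) =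
      (Polynomial.eval₂RingHom (aeval (R := ℂ) baseParam : ℂ[u,v] →+* ℂ[u,v])
        (2 * (X 0 * X 1))).comp lastVarEquiv := by
  apply MvPolynomial.ringHom_ext
  · intro r
    simp [lastVarEquiv]
  · intro i
    fin_cases i <;>
      simp [param, baseParam, lastVarEquiv_X_zero, lastVarEquiv_X_one, lastVarEquiv_X_two]

theorem ker_aeval_param :
    RingHom.ker (aeval (R := ℂ) param : MvPolynomial (Fin 3) ℂ →+* ℂ[u,v]) =
      Ideal.span {X 0 ^ 2 + X 1 ^ 2 - X 2 ^ 2} := by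
  rw [aeval_param_eq_comp_lastVarEquiv, ← RingHom.comap_ker,
    Polynomial.ker_eval₂RingHom_X_sq_sub_C (aeval (R := ℂ) baseParam : ℂ[u,v] →+* ℂ[u,v])
      (X 0 ^ 2 + X 1 ^ 2) _ ?_ fun a b h => eq_zero_of_aeval_baseParam_add_mul_eq_zero h]
  · have hG : lastVarEquiv (-(X 0 ^ 2 + X 1 ^ 2 - X 2 ^ 2)) =
        Polynomial.X ^ 2 - Polynomial.C (X 0 ^ 2 + X 1 ^ 2) := by
      simp [lastVarEquiv_X_zero, lastVarEquiv_X_one, lastVarEquiv_X_two]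
    ext p
    rw [Ideal.mem_comap, ← hG, Ideal.mem_span_singleton, Ideal.mem_span_singleton, RingHom.coe_coe,
      map_dvd_iff, neg_dvd]
  · simp [baseParam]
    linear_combination -(X 0 ^ 2 - X 1 ^ 2) ^ 2 * C_I_sq

def toPoly : ConeAlg →ₐ[ℂ] ℂ[u,v] :=
  Ideal.Quotient.liftₐ _ (aeval param) fun p hp => by
    obtain ⟨q, rfl⟩ := Ideal.mem_span_singleton'.mp hp
    rw [map_mul, aeval_param_cone, mul_zero]

theorem toPoly_mk (p : MvPolynomial (Fin 3) ℂ) :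
    toPoly (Ideal.Quotient.mk _ p) = aeval param p := rfl

theorem toPoly_injective : Function.Injective toPoly :=
  RingHom.lift_injective_of_ker_le_ideal _ _ ker_aeval_param.le

theorem X_mul_X_mem_range_toPoly (i j : Fin 2) : (X i * X j : ℂ[u,v]) ∈ toPoly.range := by
  suffices h : (2 : ℂ) • (X i * X j : ℂ[u,v]) ∈ toPoly.range by
    simpa using Subalgebra.smul_mem _ h (2⁻¹ : ℂ)
  fin_cases i <;> fin_cases j
  · refine ⟨Ideal.Quotient.mk _ (X 0 + C I * X 1), ?_⟩
    simp [toPoly_mk, param, two_smul]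
    linear_combination (X 1 ^ 2 - X 0 ^ 2) * C_I_sq
  · exact ⟨Ideal.Quotient.mk _ (X 2), by simp [toPoly_mk, param, two_smul]; ring⟩
  · exact ⟨Ideal.Quotient.mk _ (X 2), by simp [toPoly_mk, param, two_smul]; ring⟩
  · refine ⟨Ideal.Quotient.mk _ (X 0 - C I * X 1), ?_⟩
    simp [toPoly_mk, param, two_smul]
    linear_combination -(X 1 ^ 2 - X 0 ^ 2) * C_I_sq

theorem toPoly_apply_eq_apply_toPoly (σ : ConeAlg →ₐ[ℂ] ConeAlg)
    (hσ : ∀ i : Fin 3, σ (Ideal.Quotient.mk _ (X i)) = Ideal.Quotient.mk _ (-(X i)))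
    (τ : ℂ[u,v] →ₐ[ℂ] ℂ[u,v]) (hτ : ∀ j, τ (X j) = C I * X j) (x : ConeAlg) :
    toPoly (σ x) = τ (toPoly x) := by
  suffices h : toPoly.comp σ = τ.comp toPoly from DFunLike.congr_fun h x
  refine Ideal.Quotient.algHom_ext ℂ (MvPolynomial.algHom_ext fun i => ?_)
  simp only [AlgHom.comp_apply, Ideal.Quotient.mkₐ_eq_mk, hσ, toPoly_mk, map_neg, aeval_X]
  fin_cases i
  · simp [param, hτ]
    linear_combination -(X 0 ^ 2 + X 1 ^ 2) * C_I_sq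
  · simp [param, hτ]
    linear_combination -C I * (X 1 ^ 2 - X 0 ^ 2) * C_I_sq
  · simp [param, hτ, map_ofNat]
    linear_combination -2 * X 0 * X 1 * C_I_sq

theorem fixedSubalgebra_le_range_toPoly (τ : ℂ[u,v] ≃ₐ[ℂ] ℂ[u,v])
    (hτ : ∀ j, τ (X j) = C I * X j) : fixedSubalgebra τ ≤ toPoly.range := by
  intro p hp
  rw [mem_fixedSubalgebra_iff] at hp
  have hτC : τ (C I) = C I := τ.commutes I
  have hτ_sq : ∀ j, (τ.trans τ).toAlgHom (X j) = -X j := fun j => by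
    simp [hτ, hτC]
    linear_combination X j * C_I_sq
  refine Algebra.adjoin_le ?_ (mem_adjoin_X_mul_X_of_map_X_eq_neg _ hτ_sq (by simp [hp]))
  rintro _ ⟨⟨i, j⟩, rfl⟩
  exact X_mul_X_mem_range_toPoly i j

end ConeAlg

end

/-- The fixed subalgebra of `ℂ[Y₁,Y₂,Y₃]/(Y₁²+Y₂²−Y₃²)` under `Yᵢ ↦ −Yᵢ` is
isomorphic to the fixed subalgebra of `ℂ[u,v]` under `u ↦ iu, v ↦ iv`, i.e.
the bidouble cover point is a `¼(1,1)` cyclic quotient singularity. -/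
theorem bidouble_cover_is_quarter_one_one
    (σ : ConeAlg ≃ₐ[ℂ] ConeAlg)
    (hσ : ∀ i : Fin 3,
      σ (Ideal.Quotient.mk _ (X i)) = Ideal.Quotient.mk _ (-(X i)))
    (τ : MvPolynomial (Fin 2) ℂ ≃ₐ[ℂ] MvPolynomial (Fin 2) ℂ)
    (hτu : τ (X 0) = C Complex.I * X 0)
    (hτv : τ (X 1) = C Complex.I * X 1) :
    Nonempty ((fixedSubalgebra σ) ≃ₐ[ℂ] (fixedSubalgebra τ)) := by
  have hτ : ∀ j, τ (X j) = C Complex.I * X j := by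
    intro j
    fin_cases j
    exacts [hτu, hτv]
  exact ⟨fixedSubalgebraEquivOfInjective ConeAlg.toPoly_injective
    (ConeAlg.toPoly_apply_eq_apply_toPoly σ hσ τ hτ)
    (ConeAlg.fixedSubalgebra_le_range_toPoly τ hτ)⟩
end

section
/- Let [b₁,…,b_r] be a list of integers, each ≥ 2, with HJ([b₁,…,b_r]) = dn²/(dna − 1) for positive integers d, n, a satisfying n ≥ 2, 0 < a < n and gcd(a, n) = 1. Then there exist positive integers n′, a′ with n′ ≥ 2, 0 < a′ < n′ and gcd(a′, n′) = 1 such that HJ([2, b₁, …, b_{r−1}, b_r + 1]) = d(n′)²/(dn′a′ − 1); and similarly there exist positive integers n″, a″ with n″ ≥ 2, 0 < a″ < n″ and gcd(a″, n″) = 1 such that HJ([b₁ + 1, b₂, …, b_r, 2]) = d(n″)²/(dn″a″ − 1). (That is, the class of T-strings is closed under the two blow-up operations, with the same d.) -/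
/-!
Encode `[b₁, …, b_r]` by the product `M` of the matrices `!![b, -1; 1, 0]`, which has
determinant `1`. Its first column `(p, q)` gives `HJ = p / q`, and its first row is `(p, -s)`
with `0 ≤ s < p`. If `HJ = dn²/(dna - 1)`, both fractions are reduced, so `p = dn²` and
`q = dna - 1`; then `sq ≡ 1 [ZMOD p]` with `0 ≤ s < p` pins down `s`, and with it `M`. The two
blow-ups multiply `M` on both sides by fixed matrices, and these carry the matrix attached to
`(d, n, a)` to the ones attached to `(d, 2n - a, n)` and `(d, n + a, a)`.
-/

/-- Hirzebruch–Jung continued fraction value of a list of integers: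
`HJ [b] = b` and `HJ (b :: l) = b − 1 / HJ l` (junk value `0` on `[]`). -/
def HJ : List ℤ → ℚ
  | [] => 0
  | [b] => (b : ℚ)
  | b :: l => (b : ℚ) - 1 / HJ l

def IsClassT (l : List ℤ) : Prop :=
  (∀ b ∈ l, 2 ≤ b) ∧
  ∃ d n a : ℕ, 0 < d ∧ 2 ≤ n ∧ 0 < a ∧ a < n ∧ Nat.gcd a n = 1 ∧
    HJ l = (d * n ^ 2 : ℚ) / (d * n * a - 1)

/-- The left blow-up operation `[b₁,…,b_r] ↦ [2, b₁, …, b_{r−1}, b_r + 1]`. -/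
def blowupL (l : List ℤ) : List ℤ :=
  2 :: (l.dropLast ++ [l.getLastD 0 + 1])

/-- The right blow-up operation `[b₁,…,b_r] ↦ [b₁ + 1, b₂, …, b_r, 2]`. -/
def blowupR (l : List ℤ) : List ℤ :=
  ((l.headI + 1) :: l.tail) ++ [2]

-- At `l = []` this reads `b = b - 1 / 0`.
theorem HJ_cons (b : ℤ) (l : List ℤ) : HJ (b :: l) = b - 1 / HJ l := by
  cases l <;> simp [HJ]

def hjStep (b : ℤ) : Matrix (Fin 2) (Fin 2) ℤ := !![b, -1; 1, 0]

def hjMatrix (l : List ℤ) : Matrix (Fin 2) (Fin 2) ℤ := (l.map hjStep).prod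

@[simp] theorem hjMatrix_nil : hjMatrix [] = 1 := rfl

@[simp] theorem hjMatrix_cons (b : ℤ) (l : List ℤ) :
    hjMatrix (b :: l) = hjStep b * hjMatrix l := by
  simp [hjMatrix]

@[simp] theorem hjMatrix_append (l l' : List ℤ) :
    hjMatrix (l ++ l') = hjMatrix l * hjMatrix l' := by
  simp [hjMatrix]

theorem det_hjMatrix (l : List ℤ) : (hjMatrix l).det = 1 := by
  induction l with
  | nil => simp
  | cons b l ih => rw [hjMatrix_cons, Matrix.det_mul, ih]; simp [hjStep, Matrix.det_fin_two]

theorem hjStep_add_one_eq_hjStep_mul (b : ℤ) : hjStep (b + 1) = hjStep b * !![1, 0; -1, 1] := by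
  ext i j; fin_cases i <;> fin_cases j <;> simp [hjStep]

theorem hjStep_add_one_eq_mul_hjStep (b : ℤ) : hjStep (b + 1) = !![1, 1; 0, 1] * hjStep b := by
  ext i j; fin_cases i <;> fin_cases j <;> simp [hjStep]

theorem hjMatrix_blowupL {l : List ℤ} (hl : l ≠ []) :
    hjMatrix (blowupL l) = hjStep 2 * hjMatrix l * !![1, 0; -1, 1] := by
  obtain ⟨init, c, rfl⟩ := (List.eq_nil_or_concat' l).resolve_left hl
  simp [blowupL, hjStep_add_one_eq_hjStep_mul, Matrix.mul_assoc]

theorem hjMatrix_blowupR {l : List ℤ} (hl : l ≠ []) :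
    hjMatrix (blowupR l) = !![1, 1; 0, 1] * hjMatrix l * hjStep 2 := by
  obtain ⟨b, l, rfl⟩ := List.exists_cons_of_ne_nil hl
  simp [blowupR, hjStep_add_one_eq_mul_hjStep, Matrix.mul_assoc]

theorem hjMatrix_cons_zero_zero (b : ℤ) (l : List ℤ) :
    hjMatrix (b :: l) 0 0 = b * hjMatrix l 0 0 - hjMatrix l 1 0 := by
  simp [hjStep, Matrix.mul_apply, sub_eq_add_neg]

theorem hjMatrix_cons_one_zero (b : ℤ) (l : List ℤ) :
    hjMatrix (b :: l) 1 0 = hjMatrix l 0 0 := by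
  simp [hjStep, Matrix.mul_apply]

theorem hjMatrix_concat_zero_zero (l : List ℤ) (c : ℤ) :
    hjMatrix (l ++ [c]) 0 0 = c * hjMatrix l 0 0 + hjMatrix l 0 1 := by
  simp [hjStep, Matrix.mul_apply, mul_comm]

theorem hjMatrix_concat_zero_one (l : List ℤ) (c : ℤ) :
    hjMatrix (l ++ [c]) 0 1 = -hjMatrix l 0 0 := by
  simp [hjStep, Matrix.mul_apply]

theorem hjMatrix_col_bounds {l : List ℤ} (h2 : ∀ b ∈ l, 2 ≤ b) :
    0 ≤ hjMatrix l 1 0 ∧ hjMatrix l 1 0 < hjMatrix l 0 0 := by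
  induction l with
  | nil => simp
  | cons b l ih =>
    obtain ⟨hq, hqp⟩ := ih fun c hc => h2 c (List.mem_cons_of_mem b hc)
    have hb := h2 b List.mem_cons_self
    rw [hjMatrix_cons_zero_zero, hjMatrix_cons_one_zero]
    constructor <;> nlinarith

theorem hjMatrix_row_bounds {l : List ℤ} (h2 : ∀ b ∈ l, 2 ≤ b) :
    0 ≤ -hjMatrix l 0 1 ∧ -hjMatrix l 0 1 < hjMatrix l 0 0 := by
  induction l using List.reverseRecOn with
  | nil => simp
  | append_singleton l c ih =>
    obtain ⟨hs, hsp⟩ := ih fun b hb => h2 b (List.mem_append_left [c] hb)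
    have hc := h2 c (by simp)
    rw [hjMatrix_concat_zero_zero, hjMatrix_concat_zero_one, neg_neg]
    constructor <;> nlinarith

theorem HJ_eq_div {l : List ℤ} (h2 : ∀ b ∈ l, 2 ≤ b) :
    HJ l = hjMatrix l 0 0 / hjMatrix l 1 0 := by
  induction l with
  | nil => simp [HJ]
  | cons b l ih =>
    have h2' : ∀ c ∈ l, 2 ≤ c := fun c hc => h2 c (List.mem_cons_of_mem b hc)
    obtain ⟨hq, hqp⟩ := hjMatrix_col_bounds h2'
    have hp : (hjMatrix l 0 0 : ℚ) ≠ 0 := Int.cast_ne_zero.mpr (by omega)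
    rw [HJ_cons, ih h2', hjMatrix_cons_zero_zero, hjMatrix_cons_one_zero]
    push_cast
    field_simp

theorem eq_of_mul_sub_mul_eq_one {p q s t s' t' : ℤ} (h : s * q - p * t = 1)
    (h' : s' * q - p * t' = 1) (hs : 0 ≤ s) (hsp : s < p) (hs' : 0 ≤ s') (hs'p : s' < p) :
    s = s' ∧ t = t' := by
  have hcop : IsCoprime p q := ⟨-t, s, by linarith⟩
  have hdvd : p ∣ s - s' := hcop.dvd_of_dvd_mul_right ⟨t - t', by linear_combination h - h'⟩
  obtain rfl : s = s' := sub_eq_zero.mp <|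
    Int.eq_zero_of_abs_lt_dvd hdvd (abs_sub_lt_iff.mpr ⟨by linarith, by linarith⟩)
  have hpt : p * (t - t') = 0 := by linear_combination h' - h
  exact ⟨rfl, sub_eq_zero.mp ((mul_eq_zero.mp hpt).resolve_left (by linarith))⟩

-- The second column is the unique `(-s, -t)` with determinant `1` and `0 ≤ s < dn²`.
def classTMatrix (d n a : ℤ) : Matrix (Fin 2) (Fin 2) ℤ :=
  !![d * n ^ 2, 1 - d * n * (n - a); d * n * a - 1, 1 - d * a * (n - a)]

theorem classTMatrix_blowupL (d n a : ℤ) :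
    hjStep 2 * classTMatrix d n a * !![1, 0; -1, 1] = classTMatrix d (2 * n - a) n := by
  simp only [hjStep, classTMatrix, Matrix.mul_fin_two]
  ext i j; fin_cases i <;> fin_cases j <;> dsimp <;> ring

theorem classTMatrix_blowupR (d n a : ℤ) :
    !![1, 1; 0, 1] * classTMatrix d n a * hjStep 2 = classTMatrix d (n + a) a := by
  simp only [hjStep, classTMatrix, Matrix.mul_fin_two]
  ext i j; fin_cases i <;> fin_cases j <;> dsimp <;> ring

theorem eq_classTMatrix_of_det_eq_one {M : Matrix (Fin 2) (Fin 2) ℤ} (hdet : M.det = 1)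
    (hq : 0 < M 1 0) (hs : 0 ≤ -M 0 1) (hsp : -M 0 1 < M 0 0) {d n a : ℤ} (hd : 0 < d)
    (ha : 0 < a) (han : a < n) (h : (M 0 0 : ℚ) / M 1 0 = d * n ^ 2 / (d * n * a - 1)) :
    M = classTMatrix d n a := by
  rw [Matrix.det_fin_two] at hdet
  have hdn : n ≤ d * n := le_mul_of_one_le_left (by linarith) hd
  obtain ⟨hp_eq, hq_eq⟩ := Rat.div_int_inj (a := M 0 0) (b := M 1 0) (c := d * n ^ 2)
    (d := d * n * a - 1) hq (by nlinarith)
    (Int.isCoprime_iff_gcd_eq_one.mp ⟨M 1 1, -M 0 1, by linear_combination hdet⟩)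
    (Int.isCoprime_iff_gcd_eq_one.mp ⟨d * a ^ 2, -(d * n * a + 1), by ring⟩)
    (by push_cast; exact h)
  obtain ⟨hs_eq, ht_eq⟩ := eq_of_mul_sub_mul_eq_one (p := M 0 0) (q := M 1 0) (s := -M 0 1)
    (t := -M 1 1) (s' := d * n * (n - a) - 1) (t' := d * a * (n - a) - 1)
    (by linear_combination hdet) (by rw [hp_eq, hq_eq]; ring) hs hsp (by nlinarith) (by nlinarith)
  ext i j; fin_cases i <;> fin_cases j <;> dsimp [classTMatrix] <;> linarith

theorem hjMatrix_eq_classTMatrix {l : List ℤ} (hl : l ≠ []) (h2 : ∀ b ∈ l, 2 ≤ b) {d n a : ℤ}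
    (hd : 0 < d) (ha : 0 < a) (han : a < n) (h : HJ l = (d * n ^ 2 : ℚ) / (d * n * a - 1)) :
    hjMatrix l = classTMatrix d n a := by
  have hq : 0 < hjMatrix l 1 0 := by
    obtain ⟨b, t, rfl⟩ := List.exists_cons_of_ne_nil hl
    rw [hjMatrix_cons_one_zero]
    have ht := hjMatrix_col_bounds fun c hc => h2 c (List.mem_cons_of_mem b hc)
    omega
  obtain ⟨hs, hsp⟩ := hjMatrix_row_bounds h2
  exact eq_classTMatrix_of_det_eq_one (det_hjMatrix l) hq hs hsp hd ha han (HJ_eq_div h2 ▸ h)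

theorem HJ_eq_of_hjMatrix_eq_classTMatrix {l : List ℤ} (h2 : ∀ b ∈ l, 2 ≤ b) {d n a : ℤ}
    (h : hjMatrix l = classTMatrix d n a) : HJ l = (d * n ^ 2 : ℚ) / (d * n * a - 1) := by
  rw [HJ_eq_div h2, h]
  simp [classTMatrix]

theorem two_le_of_mem_blowupL {l : List ℤ} (hl : l ≠ []) (h2 : ∀ b ∈ l, 2 ≤ b) :
    ∀ b ∈ blowupL l, 2 ≤ b := by
  obtain ⟨init, c, rfl⟩ := (List.eq_nil_or_concat' l).resolve_left hl
  have hc := h2 c (by simp)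
  simp only [blowupL, List.dropLast_concat, List.getLastD_concat, List.mem_cons, List.mem_append,
    List.not_mem_nil, or_false]
  rintro b (rfl | hb | rfl)
  · rfl
  · exact h2 b (List.mem_append_left [c] hb)
  · omega

theorem two_le_of_mem_blowupR {l : List ℤ} (hl : l ≠ []) (h2 : ∀ b ∈ l, 2 ≤ b) :
    ∀ b ∈ blowupR l, 2 ≤ b := by
  obtain ⟨c, t, rfl⟩ := List.exists_cons_of_ne_nil hl
  have hc := h2 c List.mem_cons_self
  simp only [blowupR, List.headI_cons, List.tail_cons, List.cons_append, List.mem_cons,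
    List.mem_append, List.not_mem_nil, or_false]
  rintro b (rfl | hb | rfl)
  · omega
  · exact h2 b (List.mem_cons_of_mem c hb)
  · rfl

theorem class_T_closed_under_blowups_general
    (l : List ℤ) (hl : l ≠ []) (h2 : ∀ b ∈ l, 2 ≤ b)
    (d n a : ℕ) (hd : 0 < d) (ha : 0 < a) (han : a < n)
    (hgcd : Nat.gcd a n = 1)
    (hHJ : HJ l = (d * n ^ 2 : ℚ) / (d * n * a - 1)) :
    (∃ n' a' : ℕ, 2 ≤ n' ∧ 0 < a' ∧ a' < n' ∧ Nat.gcd a' n' = 1 ∧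
      HJ (blowupL l) = (d * n' ^ 2 : ℚ) / (d * n' * a' - 1)) ∧
    (∃ n'' a'' : ℕ, 2 ≤ n'' ∧ 0 < a'' ∧ a'' < n'' ∧ Nat.gcd a'' n'' = 1 ∧
      HJ (blowupR l) = (d * n'' ^ 2 : ℚ) / (d * n'' * a'' - 1)) := by
  have hM : hjMatrix l = classTMatrix d n a :=
    hjMatrix_eq_classTMatrix hl h2 (by exact_mod_cast hd) (by exact_mod_cast ha)
      (by exact_mod_cast han) (by exact_mod_cast hHJ)
  refine ⟨⟨2 * n - a, n, by omega, by omega, by omega, ?_, ?_⟩,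
    ⟨n + a, a, by omega, ha, by omega, Nat.coprime_add_self_right.mpr hgcd, ?_⟩⟩
  · rw [show 2 * n - a = n + (n - a) by omega]
    exact Nat.coprime_self_add_right.mpr
      ((Nat.coprime_self_sub_right han.le).mpr (Nat.Coprime.symm hgcd))
  · have hML : hjMatrix (blowupL l) = classTMatrix d (2 * n - a : ℕ) n := by
      rw [hjMatrix_blowupL hl, hM, classTMatrix_blowupL, Nat.cast_sub (by omega)]
      push_cast; rfl
    exact_mod_cast HJ_eq_of_hjMatrix_eq_classTMatrix (two_le_of_mem_blowupL hl h2) hML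
  · have hMR : hjMatrix (blowupR l) = classTMatrix d (n + a : ℕ) a := by
      rw [hjMatrix_blowupR hl, hM, classTMatrix_blowupR]
      push_cast; rfl
    exact_mod_cast HJ_eq_of_hjMatrix_eq_classTMatrix (two_le_of_mem_blowupR hl h2) hMR

/-- Class `T` strings are closed under the two blow-up operations, with the
same `d`. -/
theorem class_T_closed_under_blowups
    (l : List ℤ) (hl : l ≠ []) (h2 : ∀ b ∈ l, 2 ≤ b)
    (d n a : ℕ) (hd : 0 < d) (hn : 2 ≤ n) (ha : 0 < a) (han : a < n)
    (hgcd : Nat.gcd a n = 1)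
    (hHJ : HJ l = (d * n ^ 2 : ℚ) / (d * n * a - 1)) :
    (∃ n' a' : ℕ, 2 ≤ n' ∧ 0 < a' ∧ a' < n' ∧ Nat.gcd a' n' = 1 ∧
      HJ (blowupL l) = (d * n' ^ 2 : ℚ) / (d * n' * a' - 1)) ∧
    (∃ n'' a'' : ℕ, 2 ≤ n'' ∧ 0 < a'' ∧ a'' < n'' ∧ Nat.gcd a'' n'' = 1 ∧
      HJ (blowupR l) = (d * n'' ^ 2 : ℚ) / (d * n'' * a'' - 1)) :=
  class_T_closed_under_blowups_general l hl h2 d n a hd ha han hgcd hHJ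
end
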